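/- arXiv:1511.06948 — 5 statements merged into one kernel-verified Lean document; each statement's English description precedes it below -/
import Mathlib

section
/- Let a, b : ℝ × ℝ → ℝ be C^∞ functions. Suppose that on the unit square [0,1] × [0,1] the closedness relation ∂a/∂s (t,s) = ∂b/∂t (t,s) holds, and that a(t,0) = a(t,1) = 0 for all t ∈ [0,1]. Then ∫₀¹ b(1,s) ds = ∫₀¹ b(0,s) ds. -/
open MeasureTheory intervalIntegral Set

/-- Green's-formula argument on the square: if `ω = a dt + b ds` is a smooth 1-form on
`[0,1]²` with `dω = 0` (i.e. `∂a/∂s = ∂b/∂t`) and `a(t,0) = a(t,1) = 0`, then the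
integrals of `b` along the two vertical edges agree. -/
theorem integral_edge_eq_of_closed (a b : ℝ × ℝ → ℝ)
    (ha : ContDiff ℝ (⊤ : ℕ∞) a) (hb : ContDiff ℝ (⊤ : ℕ∞) b)
    (hclosed : ∀ t s : ℝ, t ∈ Set.Icc (0 : ℝ) 1 → s ∈ Set.Icc (0 : ℝ) 1 →
      deriv (fun s' => a (t, s')) s = deriv (fun t' => b (t', s)) t)
    (ha0 : ∀ t ∈ Set.Icc (0 : ℝ) 1, a (t, 0) = 0)
    (ha1 : ∀ t ∈ Set.Icc (0 : ℝ) 1, a (t, 1) = 0) :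
    ∫ s in (0:ℝ)..1, b (1, s) = ∫ s in (0:ℝ)..1, b (0, s) := by
  set g : ℝ × ℝ → ℝ := fun p => fderiv ℝ a p (0, 1) with hgdef
  set h : ℝ × ℝ → ℝ := fun p => fderiv ℝ b p (1, 0) with hhdef
  have hag : Continuous g := (ha.continuous_fderiv (by simp)).clm_apply continuous_const
  have hbh : Continuous h := (hb.continuous_fderiv (by simp)).clm_apply continuous_const
  have hda : ∀ t s : ℝ, HasDerivAt (fun s' => a (t, s')) (g (t, s)) s := by
    intro t s
    have := ((ha.differentiable (by simp)) (t, s)).hasFDerivAt.comp_hasDerivAt s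
      ((hasDerivAt_const s t).prodMk (hasDerivAt_id s))
    exact this
  have hdb : ∀ t s : ℝ, HasDerivAt (fun t' => b (t', s)) (h (t, s)) t := by
    intro t s
    have := ((hb.differentiable (by simp)) (t, s)).hasFDerivAt.comp_hasDerivAt t
      ((hasDerivAt_id t).prodMk (hasDerivAt_const t s))
    exact this
  have key : ∫ s in (0:ℝ)..1, (b (1, s) - b (0, s)) = 0 := by
    have step1 : ∫ s in (0:ℝ)..1, (b (1, s) - b (0, s))
        = ∫ s in (0:ℝ)..1, ∫ t in (0:ℝ)..1, h (t, s) := by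
      refine intervalIntegral.integral_congr fun s _ => ?_
      rw [intervalIntegral.integral_eq_sub_of_hasDerivAt (fun t _ => hdb t s)
        ((hbh.comp (continuous_id.prodMk continuous_const)).intervalIntegrable 0 1)]
    have step2 : ∫ s in (0:ℝ)..1, ∫ t in (0:ℝ)..1, h (t, s)
        = ∫ s in (0:ℝ)..1, ∫ t in (0:ℝ)..1, g (t, s) := by
      refine intervalIntegral.integral_congr fun s hs => ?_
      refine intervalIntegral.integral_congr fun t ht => ?_
      rw [Set.uIcc_of_le (zero_le_one)] at hs ht
      have := hclosed t s ht hs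
      rw [(hda t s).deriv, (hdb t s).deriv] at this
      exact this.symm
    have step3 : ∫ s in (0:ℝ)..1, ∫ t in (0:ℝ)..1, g (t, s)
        = ∫ t in (0:ℝ)..1, ∫ s in (0:ℝ)..1, g (t, s) := by
      simp only [intervalIntegral.integral_of_le zero_le_one]
      refine MeasureTheory.integral_integral_swap ?_
      have : IntegrableOn (fun p : ℝ × ℝ => g (p.2, p.1)) (Icc (0:ℝ) 1 ×ˢ Icc (0:ℝ) 1) := by
        exact (hag.comp (continuous_snd.prodMk continuous_fst)).continuousOn.integrableOn_compact
          (isCompact_Icc.prod isCompact_Icc)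
      have h2 : IntegrableOn (fun p : ℝ × ℝ => g (p.2, p.1)) (Ioc (0:ℝ) 1 ×ˢ Ioc (0:ℝ) 1) :=
        this.mono_set (Set.prod_mono Ioc_subset_Icc_self Ioc_subset_Icc_self)
      rw [Measure.prod_restrict]
      exact h2
    have step4 : ∫ t in (0:ℝ)..1, ∫ s in (0:ℝ)..1, g (t, s) = 0 := by
      have : ∫ t in (0:ℝ)..1, ∫ s in (0:ℝ)..1, g (t, s) = ∫ _t in (0:ℝ)..1, (0:ℝ) := by
        refine intervalIntegral.integral_congr fun t ht => ?_
        rw [Set.uIcc_of_le (zero_le_one)] at ht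
        rw [intervalIntegral.integral_eq_sub_of_hasDerivAt (fun s _ => hda t s)
          ((hag.comp (continuous_const.prodMk continuous_id)).intervalIntegrable 0 1)]
        rw [ha0 t ht, ha1 t ht, sub_zero]
      simpa using this
    rw [step1, step2, step3, step4]
  have hib1 : IntervalIntegrable (fun s => b (1, s)) volume 0 1 :=
    (hb.continuous.comp (continuous_const.prodMk continuous_id)).intervalIntegrable 0 1
  have hib0 : IntervalIntegrable (fun s => b (0, s)) volume 0 1 :=
    (hb.continuous.comp (continuous_const.prodMk continuous_id)).intervalIntegrable 0 1
  have := intervalIntegral.integral_sub hib1 hib0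
  rw [key] at this
  linarith [this]
end

section
/- Fix n ≥ 1 and p ≥ 1. For each strictly increasing map J : Fin (p−1) → Fin n let a_J : ℝ × ℝⁿ → ℝ be C^∞, and for each strictly increasing map I : Fin p → Fin n let b_I : ℝ × ℝⁿ → ℝ be C^∞. For strictly increasing I and q ∈ Fin p, write I∖q : Fin (p−1) → Fin n for the strictly increasing map obtained from I by deleting its q-th value. Assume that for every strictly increasing I : Fin p → Fin n and all (t,x) ∈ ℝ × ℝⁿ, ∂b_I/∂t (t,x) = Σ_{q ∈ Fin p} (−1)^q · ∂a_{I∖q}/∂x_{I(q)} (t,x). Then for every strictly increasing I : Fin p → Fin n and every x ∈ ℝⁿ, Σ_{q ∈ Fin p} (−1)^q · ∂/∂x_{I(q)} [ ∫₀¹ a_{I∖q}(t,x) dt ] = b_I(1,x) − b_I(0,x). -/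
open MeasureTheory intervalIntegral Set Metric

private lemma slice_hasDerivAt {E : Type*} [NormedAddCommGroup E] [NormedSpace ℝ E]
    (f : E → ℝ) (hf : Differentiable ℝ f) {c : ℝ → E} {v : E} {s : ℝ}
    (hc : HasDerivAt c v s) : HasDerivAt (fun t => f (c t)) (fderiv ℝ f (c s) v) s :=
  (hf (c s)).hasFDerivAt.comp_hasDerivAt s hc

private lemma param_hasDerivAt (f : ℝ × ℝ → ℝ) (hf : ContDiff ℝ (⊤ : ℕ∞) f) (u₀ : ℝ) :
    HasDerivAt (fun u => ∫ t in (0:ℝ)..1, f (t, u))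
      (∫ t in (0:ℝ)..1, fderiv ℝ f (t, u₀) (0, 1)) u₀ := by
  have hdf : Differentiable ℝ f := hf.differentiable (by simp)
  have hcont : Continuous fun p : ℝ × ℝ => fderiv ℝ f p (0, 1) :=
    (hf.continuous_fderiv (by simp)).clm_apply continuous_const
  obtain ⟨C, hC⟩ := ((isCompact_uIcc (a := (0:ℝ)) (b := 1)).prod
    (isCompact_closedBall u₀ 1)).exists_bound_of_continuousOn hcont.continuousOn
  have key := intervalIntegral.hasDerivAt_integral_of_dominated_loc_of_deriv_le
    (F := fun u t => f (t, u)) (F' := fun u t => fderiv ℝ f (t, u) (0, 1))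
    (bound := fun _ => C) (μ := volume) (a := 0) (b := 1) (x₀ := u₀) (s := ball u₀ 1) (ball_mem_nhds u₀ one_pos)
    ?_ ?_ ?_ ?_ ?_ ?_
  · exact key.2
  · exact Filter.Eventually.of_forall fun u =>
      (hf.continuous.comp (continuous_id.prodMk continuous_const)).aestronglyMeasurable
  · exact (hf.continuous.comp (continuous_id.prodMk continuous_const)).intervalIntegrable 0 1
  · exact (hcont.comp (continuous_id.prodMk continuous_const)).aestronglyMeasurable
  · refine Filter.Eventually.of_forall fun t ht u hu => ?_
    exact hC (t, u) ⟨uIoc_subset_uIcc ht, ball_subset_closedBall hu⟩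
  · exact Continuous.intervalIntegrable continuous_const 0 1
  · refine Filter.Eventually.of_forall fun t ht u hu => ?_
    exact slice_hasDerivAt f hdf ((hasDerivAt_const u t).prodMk (hasDerivAt_id u))

/-- Coefficient form of the fiber-integration (prism operator) identity
`dD(ω) + D(dω) = in₁*ω − in₀*ω` for a `p`-form
`ω = Σ_J a_J dt∧dx_J + Σ_I b_I dx_I` on `[0,1] × ℝⁿ` whose `dt∧dx_I`-components of `dω`
vanish.  Here `p = m + 1 ≥ 1`, strictly increasing index maps select the coefficients,
and `I∖q = I ∘ Fin.succAbove q` deletes the `q`-th value of `I`. -/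
theorem prism_operator_identity (n m : ℕ) (hn : 1 ≤ n)
    (a : (Fin m → Fin n) → ℝ × (Fin n → ℝ) → ℝ)
    (b : (Fin (m + 1) → Fin n) → ℝ × (Fin n → ℝ) → ℝ)
    (ha : ∀ J : Fin m → Fin n, StrictMono J → ContDiff ℝ (⊤ : ℕ∞) (a J))
    (hb : ∀ I : Fin (m + 1) → Fin n, StrictMono I → ContDiff ℝ (⊤ : ℕ∞) (b I))
    (hclosed : ∀ I : Fin (m + 1) → Fin n, StrictMono I →
      ∀ (t : ℝ) (x : Fin n → ℝ),
        deriv (fun t' => b I (t', x)) t =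
          ∑ q : Fin (m + 1), (-1 : ℝ) ^ (q : ℕ) *
            deriv (fun u => a (fun k => I (q.succAbove k))
              (t, Function.update x (I q) u)) (x (I q))) :
    ∀ I : Fin (m + 1) → Fin n, StrictMono I → ∀ x : Fin n → ℝ,
      ∑ q : Fin (m + 1), (-1 : ℝ) ^ (q : ℕ) *
        deriv (fun u => ∫ t in (0:ℝ)..1,
          a (fun k => I (q.succAbove k)) (t, Function.update x (I q) u)) (x (I q))
      = b I (1, x) - b I (0, x) := by
  intro I hI x
  classical
  -- the sliced coefficient functions
  set f : Fin (m + 1) → ℝ × ℝ → ℝ :=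
    fun q p => a (fun k => I (q.succAbove k)) (p.1, Function.update x (I q) p.2) with hfdef
  have hf : ∀ q, ContDiff ℝ (⊤ : ℕ∞) (f q) := fun q =>
    (ha _ (hI.comp (Fin.strictMono_succAbove q))).comp
      (contDiff_fst.prodMk ((contDiff_update _ x (I q)).comp contDiff_snd))
  set G : Fin (m + 1) → ℝ → ℝ := fun q t => fderiv ℝ (f q) (t, x (I q)) (0, 1) with hGdef
  have hGcont : ∀ q, Continuous (G q) := fun q =>
    (((hf q).continuous_fderiv (by simp)).clm_apply continuous_const).comp
      (continuous_id.prodMk continuous_const)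
  -- partial derivatives of the a's as fderiv applications
  have hpart : ∀ q t, deriv (fun u => a (fun k => I (q.succAbove k))
      (t, Function.update x (I q) u)) (x (I q)) = G q t := by
    intro q t
    exact HasDerivAt.deriv
      (slice_hasDerivAt (f q) ((hf q).differentiable (by simp))
        ((hasDerivAt_const (x (I q)) t).prodMk (hasDerivAt_id (x (I q)))))
  -- differentiate under the integral sign
  have h1 : ∀ q : Fin (m + 1), deriv (fun u => ∫ t in (0:ℝ)..1,
      a (fun k => I (q.succAbove k)) (t, Function.update x (I q) u)) (x (I q))
      = ∫ t in (0:ℝ)..1, G q t :=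
    fun q => HasDerivAt.deriv (param_hasDerivAt (f q) (hf q) (x (I q)))
  -- the time-derivative of b I as an fderiv application, and its continuity
  have hbdiff : Differentiable ℝ (b I) := (hb I hI).differentiable (by simp)
  have hbder : ∀ t : ℝ, HasDerivAt (fun t' => b I (t', x))
      (fderiv ℝ (b I) (t, x) (1, 0)) t := fun t =>
    slice_hasDerivAt (b I) hbdiff ((hasDerivAt_id t).prodMk (hasDerivAt_const t x))
  have hbderc : Continuous fun t => fderiv ℝ (b I) (t, x) (1, 0) :=
    ((((hb I hI).continuous_fderiv (by simp)).clm_apply continuous_const)).comp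
      (continuous_id.prodMk continuous_const)
  calc
    ∑ q : Fin (m + 1), (-1 : ℝ) ^ (q : ℕ) *
        deriv (fun u => ∫ t in (0:ℝ)..1,
          a (fun k => I (q.succAbove k)) (t, Function.update x (I q) u)) (x (I q))
      = ∑ q : Fin (m + 1), ∫ t in (0:ℝ)..1, (-1 : ℝ) ^ (q : ℕ) * G q t := by
        refine Finset.sum_congr rfl fun q _ => ?_
        rw [h1 q, intervalIntegral.integral_const_mul]
    _ = ∫ t in (0:ℝ)..1, ∑ q : Fin (m + 1), (-1 : ℝ) ^ (q : ℕ) * G q t := by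
        rw [intervalIntegral.integral_finset_sum]
        exact fun q _ => (continuous_const.mul (hGcont q)).intervalIntegrable 0 1
    _ = ∫ t in (0:ℝ)..1, deriv (fun t' => b I (t', x)) t := by
        refine intervalIntegral.integral_congr fun t _ => ?_
        rw [hclosed I hI t x]
        exact Finset.sum_congr rfl fun q _ => by rw [hpart q t]
    _ = b I (1, x) - b I (0, x) := by
        refine intervalIntegral.integral_deriv_eq_sub
          (fun t _ => (hbder t).differentiableAt) ?_
        have : (deriv fun t' => b I (t', x)) = fun t => fderiv ℝ (b I) (t, x) (1, 0) :=
          funext fun t => (hbder t).deriv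
        rw [this]
        exact hbderc.intervalIntegrable 0 1
end

section
/- Let U ⊆ ℝⁿ be an open convex set and let v₁,…,vₙ : U → ℝ be functions that are C^∞ on U and satisfy the symmetry condition ∂vᵢ/∂xⱼ = ∂vⱼ/∂xᵢ on U for all i, j. Then there exists a function F : U → ℝ, C^∞ on U, such that ∂F/∂xᵢ = vᵢ on U for every i; equivalently, the closed smooth 1-form ω = Σᵢ vᵢ dxᵢ on U is exact, ω = dF. -/
set_option maxHeartbeats 1000000


open Set Metric MeasureTheory intervalIntegral
open scoped ContDiff Topology NNReal ENNReal
open scoped Interval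

variable {E : Type*} [NormedAddCommGroup E] [NormedSpace ℝ E]

/-- Specialization of differentiation under the interval integral. -/
lemma hasFDerivAt_parametric_integral {H : Type*} [NormedAddCommGroup H] [NormedSpace ℝ H]
    (G : H → ℝ → ℝ) (D : H → ℝ → H →L[ℝ] ℝ) (x : H) (ε C : ℝ) (hε : 0 < ε)
    (hmeas : ∀ y ∈ Metric.ball x ε, MeasureTheory.AEStronglyMeasurable (G y)
      (MeasureTheory.volume.restrict (Ι (0:ℝ) 1)))
    (hint : IntervalIntegrable (G x) MeasureTheory.volume 0 1)
    (hmeas' : MeasureTheory.AEStronglyMeasurable (D x)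
      (MeasureTheory.volume.restrict (Ι (0:ℝ) 1)))
    (hbound : ∀ t ∈ Ι (0:ℝ) 1, ∀ y ∈ Metric.ball x ε, ‖D y t‖ ≤ C)
    (hdiff : ∀ t ∈ Ι (0:ℝ) 1, ∀ y ∈ Metric.ball x ε, HasFDerivAt (fun y' => G y' t) (D y t) y) :
    HasFDerivAt (fun y => ∫ t in (0:ℝ)..1, G y t) (∫ t in (0:ℝ)..1, D x t) x := by
  apply intervalIntegral.hasFDerivAt_integral_of_dominated_of_fderiv_le
    (F := G) (F' := D) (bound := fun _ => C) (μ := MeasureTheory.volume) (Metric.ball_mem_nhds x hε)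
  · filter_upwards [Metric.ball_mem_nhds x hε] with y hy using hmeas y hy
  · exact hint
  · exact hmeas'
  · exact Filter.Eventually.of_forall hbound
  · exact intervalIntegrable_const
  · exact Filter.Eventually.of_forall hdiff

/-- Expansion of a continuous linear functional on `Fin n → ℝ` in coordinates. -/
lemma clm_apply_eq_sum {n : ℕ} (A : (Fin n → ℝ) →L[ℝ] ℝ) (w : Fin n → ℝ) :
    A w = ∑ k, w k * A (Pi.single k 1) := by
  conv_lhs => rw [show w = ∑ k, w k • (Pi.single k (1:ℝ) : Fin n → ℝ) by
    funext j; simp [Finset.sum_apply, Pi.single_apply] ]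
  rw [map_sum]
  simp [smul_eq_mul]

/-- Poincaré lemma for closed 1-forms on an open convex domain: if `v₁, …, vₙ` are `C^∞`
on an open convex `U ⊆ ℝⁿ` and `∂vᵢ/∂xⱼ = ∂vⱼ/∂xᵢ` on `U`, then the closed 1-form
`ω = Σᵢ vᵢ dxᵢ` is exact: there is a smooth `F` on `U` whose total derivative at each
`x ∈ U` is the linear functional `h ↦ Σᵢ vᵢ(x)·hᵢ`, i.e. `∂F/∂xᵢ = vᵢ` on `U`. -/
theorem exists_primitive_of_closed_one_form (n : ℕ)
    (U : Set (Fin n → ℝ)) (hU : IsOpen U) (hconv : Convex ℝ U)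
    (v : Fin n → (Fin n → ℝ) → ℝ)
    (hv : ∀ i, ContDiffOn ℝ (⊤ : ℕ∞) (v i) U)
    (hsym : ∀ i j : Fin n, ∀ x ∈ U,
      fderiv ℝ (v i) x (Pi.single j 1) = fderiv ℝ (v j) x (Pi.single i 1)) :
    ∃ F : (Fin n → ℝ) → ℝ, ContDiffOn ℝ (⊤ : ℕ∞) F U ∧
      ∀ x ∈ U, HasFDerivAt F
        (∑ i, v i x • (ContinuousLinearMap.proj i : (Fin n → ℝ) →L[ℝ] ℝ)) x := by
  classical
  rcases U.eq_empty_or_nonempty with rfl | ⟨x₀, hx₀⟩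
  · exact ⟨0, fun x hx => absurd hx (Set.notMem_empty x),
      fun x hx => absurd hx (Set.notMem_empty x)⟩
  set L : (Fin n → ℝ) → (Fin n → ℝ) →L[ℝ] ℝ :=
    fun x => ∑ i, v i x • (ContinuousLinearMap.proj i : (Fin n → ℝ) →L[ℝ] ℝ) with hLdef
  have hseg : ∀ y ∈ U, ∀ t : ℝ, t ∈ Set.Icc (0:ℝ) 1 → x₀ + t • (y - x₀) ∈ U := by
    intro y hy t ht
    have h : x₀ + t • (y - x₀) = (1 - t) • x₀ + t • y := by module
    rw [h]
    exact hconv hx₀ hy (by linarith [ht.2]) ht.1 (by ring)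
  set F : (Fin n → ℝ) → ℝ :=
    fun y => ∫ t in (0:ℝ)..1, ∑ i, v i (x₀ + t • (y - x₀)) * ((y - x₀) i) with hFdef
  have hvd : ∀ i, ∀ z ∈ U, HasFDerivAt (v i) (fderiv ℝ (v i) z) z := fun i z hz =>
    ((((hv i).contDiffAt (hU.mem_nhds hz)).differentiableAt (by simp))).hasFDerivAt
  have hfd_cont : ∀ i, ContinuousOn (fderiv ℝ (v i)) U := fun i =>
    (hv i).continuousOn_fderiv_of_isOpen hU (by simp)
  have hv_cont : ∀ i, ContinuousOn (v i) U := fun i => (hv i).continuousOn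
  set D : (Fin n → ℝ) → ℝ → ((Fin n → ℝ) →L[ℝ] ℝ) := fun y t =>
    ∑ i, (v i (x₀ + t • (y - x₀)) • (ContinuousLinearMap.proj i : (Fin n → ℝ) →L[ℝ] ℝ)
      + ((y - x₀) i) • (t • fderiv ℝ (v i) (x₀ + t • (y - x₀)))) with hDdef
  -- pointwise differentiability in `y` of the integrand
  have hGdiff : ∀ t ∈ Set.Icc (0:ℝ) 1, ∀ y ∈ U, HasFDerivAt
      (fun y' => ∑ i, v i (x₀ + t • (y' - x₀)) * ((y' - x₀) i)) (D y t) y := by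
    intro t ht y hy
    have hc : x₀ + t • (y - x₀) ∈ U := hseg y hy t ht
    have hcder : HasFDerivAt (fun y' : Fin n → ℝ => x₀ + t • (y' - x₀))
        (t • ContinuousLinearMap.id ℝ (Fin n → ℝ)) y :=
      (((hasFDerivAt_id y).sub_const x₀).const_smul t).const_add x₀
    rw [hDdef]
    apply HasFDerivAt.fun_sum
    intro i _
    have h1 : HasFDerivAt (fun y' => v i (x₀ + t • (y' - x₀)))
        (t • fderiv ℝ (v i) (x₀ + t • (y - x₀))) y := by
      have h := (hvd i _ hc).comp y hcder
      have hcomp : (fderiv ℝ (v i) (x₀ + t • (y - x₀))).comp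
          (t • ContinuousLinearMap.id ℝ (Fin n → ℝ))
          = t • fderiv ℝ (v i) (x₀ + t • (y - x₀)) := by
        ext h'; simp
      rwa [hcomp] at h
    have h2 : HasFDerivAt (fun y' : Fin n → ℝ => (y' - x₀) i)
        (ContinuousLinearMap.proj i : (Fin n → ℝ) →L[ℝ] ℝ) y :=
      ((ContinuousLinearMap.proj i : (Fin n → ℝ) →L[ℝ] ℝ).hasFDerivAt).sub_const (x₀ i)
    exact h1.mul h2
  -- joint continuity of the integrand and its `y`-derivative
  have hcmap : Continuous (fun p : (Fin n → ℝ) × ℝ => x₀ + p.2 • (p.1 - x₀)) := by fun_prop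
  have hmapsto : ∀ p ∈ U ×ˢ Set.Icc (0:ℝ) 1, x₀ + p.2 • (p.1 - x₀) ∈ U := fun p hp =>
    hseg p.1 hp.1 p.2 hp.2
  have hGcont : ContinuousOn
      (fun p : (Fin n → ℝ) × ℝ => ∑ i, v i (x₀ + p.2 • (p.1 - x₀)) * ((p.1 - x₀) i))
      (U ×ˢ Set.Icc (0:ℝ) 1) := by
    apply continuousOn_finset_sum
    intro i _
    exact ((hv_cont i).comp hcmap.continuousOn hmapsto).mul (by fun_prop)
  have hDcont : ContinuousOn (fun p : (Fin n → ℝ) × ℝ => D p.1 p.2)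
      (U ×ˢ Set.Icc (0:ℝ) 1) := by
    rw [hDdef]
    apply continuousOn_finset_sum
    intro i _
    apply ContinuousOn.add
    · exact ((hv_cont i).comp hcmap.continuousOn hmapsto).smul continuousOn_const
    · apply ContinuousOn.fun_smul (by fun_prop)
      exact (continuous_snd.continuousOn).smul ((hfd_cont i).comp hcmap.continuousOn hmapsto)
  -- slice continuity
  have hsliceG : ∀ y ∈ U, ContinuousOn
      (fun t : ℝ => ∑ i, v i (x₀ + t • (y - x₀)) * ((y - x₀) i)) (Set.Icc (0:ℝ) 1) := by
    intro y hy
    apply continuousOn_finset_sum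
    intro i _
    exact ((hv_cont i).comp
      (Continuous.continuousOn (by fun_prop : Continuous fun t : ℝ => x₀ + t • (y - x₀)))
      (fun t ht => hseg y hy t ht)).mul continuousOn_const
  have hsliceD : ∀ y ∈ U, ContinuousOn (fun t : ℝ => D y t) (Set.Icc (0:ℝ) 1) := by
    intro y hy
    rw [hDdef]
    apply continuousOn_finset_sum
    intro i _
    apply ContinuousOn.add
    · exact ((hv_cont i).comp
        (Continuous.continuousOn (by fun_prop : Continuous fun t : ℝ => x₀ + t • (y - x₀)))
        (fun t ht => hseg y hy t ht)).smul continuousOn_const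
    · apply ContinuousOn.fun_smul continuousOn_const
      apply ContinuousOn.fun_smul continuousOn_id
      exact (hfd_cont i).comp
        (Continuous.continuousOn (by fun_prop : Continuous fun t : ℝ => x₀ + t • (y - x₀)))
        (fun t ht => hseg y hy t ht)
  have hIsub : Ι (0:ℝ) 1 ⊆ Set.Icc (0:ℝ) 1 := by
    rw [Set.uIoc_of_le zero_le_one]; exact Set.Ioc_subset_Icc_self
  -- value of the intended derivative integral, via FTC and the symmetry hypothesis
  have hDxint : ∀ x ∈ U, (∫ t in (0:ℝ)..1, D x t) = L x := by
    intro x hx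
    have hγd : ∀ t : ℝ, HasDerivAt (fun t : ℝ => x₀ + t • (x - x₀)) (x - x₀) t := by
      intro t
      simpa using ((hasDerivAt_id t).smul_const (x - x₀)).const_add x₀
    have key : ∀ w ∈ U, ∀ h' : Fin n → ℝ,
        (∑ j, fderiv ℝ (v j) w (x - x₀) * h' j)
          = ∑ i, (x - x₀) i * fderiv ℝ (v i) w h' := by
      intro w hw h'
      calc (∑ j, fderiv ℝ (v j) w (x - x₀) * h' j)
          = ∑ j, ∑ k, (x - x₀) k * fderiv ℝ (v j) w (Pi.single k 1) * h' j := by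
            apply Finset.sum_congr rfl
            intro j _
            rw [clm_apply_eq_sum (fderiv ℝ (v j) w) (x - x₀), Finset.sum_mul]
        _ = ∑ k, ∑ j, (x - x₀) k * fderiv ℝ (v j) w (Pi.single k 1) * h' j := by
            rw [Finset.sum_comm]
        _ = ∑ k, (x - x₀) k * fderiv ℝ (v k) w h' := by
            apply Finset.sum_congr rfl
            intro k _
            rw [clm_apply_eq_sum (fderiv ℝ (v k) w) h', Finset.mul_sum]
            apply Finset.sum_congr rfl
            intro j _
            rw [hsym j k w hw]
            ring
    have hψ : ∀ t ∈ Set.uIcc (0:ℝ) 1, HasDerivAt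
        (fun t : ℝ => t • (∑ j, v j (x₀ + t • (x - x₀)) •
          (ContinuousLinearMap.proj j : (Fin n → ℝ) →L[ℝ] ℝ))) (D x t) t := by
      intro t ht
      rw [Set.uIcc_of_le zero_le_one] at ht
      have hcU : x₀ + t • (x - x₀) ∈ U := hseg x hx t ht
      have hM : HasDerivAt (fun t : ℝ => ∑ j, v j (x₀ + t • (x - x₀)) •
          (ContinuousLinearMap.proj j : (Fin n → ℝ) →L[ℝ] ℝ))
          (∑ j, (fderiv ℝ (v j) (x₀ + t • (x - x₀)) (x - x₀)) •
            (ContinuousLinearMap.proj j : (Fin n → ℝ) →L[ℝ] ℝ)) t := by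
        apply HasDerivAt.fun_sum
        intro j _
        exact ((hvd j _ hcU).comp_hasDerivAt t (hγd t)).smul_const (ContinuousLinearMap.proj j : (Fin n → ℝ) →L[ℝ] ℝ)
      have h := (hasDerivAt_id t).smul hM
      have heq : t • (∑ j, (fderiv ℝ (v j) (x₀ + t • (x - x₀)) (x - x₀)) •
            (ContinuousLinearMap.proj j : (Fin n → ℝ) →L[ℝ] ℝ))
          + (1:ℝ) • (∑ j, v j (x₀ + t • (x - x₀)) •
            (ContinuousLinearMap.proj j : (Fin n → ℝ) →L[ℝ] ℝ)) = D x t := by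
        rw [hDdef]
        ext h'
        simp only [ContinuousLinearMap.add_apply, ContinuousLinearMap.smul_apply,
          ContinuousLinearMap.coe_sum', Finset.sum_apply, ContinuousLinearMap.proj_apply,
          smul_eq_mul, one_smul, one_mul, Finset.sum_add_distrib]
        have h4 : (∑ j, t * (fderiv ℝ (v j) (x₀ + t • (x - x₀)) (x - x₀) * h' j))
            = ∑ i, (x - x₀) i * (t * fderiv ℝ (v i) (x₀ + t • (x - x₀)) h') := by
          calc (∑ j, t * (fderiv ℝ (v j) (x₀ + t • (x - x₀)) (x - x₀) * h' j))
              = t * ∑ j, fderiv ℝ (v j) (x₀ + t • (x - x₀)) (x - x₀) * h' j := by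
                rw [Finset.mul_sum]
            _ = t * ∑ i, (x - x₀) i * fderiv ℝ (v i) (x₀ + t • (x - x₀)) h' := by
                rw [key _ hcU h']
            _ = ∑ i, (x - x₀) i * (t * fderiv ℝ (v i) (x₀ + t • (x - x₀)) h') := by
                rw [Finset.mul_sum]
                apply Finset.sum_congr rfl
                intro i _
                ring
        rw [Finset.mul_sum, h4, add_comm]
      rw [← heq]
      exact h
    have hψint : IntervalIntegrable (fun t => D x t) MeasureTheory.volume 0 1 := by
      apply ContinuousOn.intervalIntegrable
      rw [Set.uIcc_of_le zero_le_one]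
      exact hsliceD x hx
    rw [intervalIntegral.integral_eq_sub_of_hasDerivAt hψ hψint]
    rw [hLdef]
    norm_num
  -- the main derivative computation
  have hFderiv : ∀ x ∈ U, HasFDerivAt F (L x) x := by
    intro x hx
    obtain ⟨ε₀, hε₀, hball⟩ := Metric.isOpen_iff.1 hU x hx
    set ε := ε₀ / 2 with hεdef
    have hε : 0 < ε := by positivity
    have hcbU : Metric.closedBall x ε ⊆ U :=
      (Metric.closedBall_subset_ball (by linarith)).trans hball
    have hKsub : Metric.closedBall x ε ×ˢ Set.Icc (0:ℝ) 1 ⊆ U ×ˢ Set.Icc (0:ℝ) 1 :=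
      Set.prod_mono hcbU subset_rfl
    obtain ⟨C, hC⟩ := ((isCompact_closedBall x ε).prod isCompact_Icc).exists_bound_of_continuousOn
      (hDcont.mono hKsub)
    have hmain := hasFDerivAt_parametric_integral
      (fun y t => ∑ i, v i (x₀ + t • (y - x₀)) * ((y - x₀) i)) D x ε C hε
      (fun y hy => ((hsliceG y (hcbU (Metric.ball_subset_closedBall hy))).mono
        hIsub).aestronglyMeasurable measurableSet_uIoc)
      (by
        apply ContinuousOn.intervalIntegrable
        rw [Set.uIcc_of_le zero_le_one]
        exact hsliceG x hx)
      (((hsliceD x hx).mono hIsub).aestronglyMeasurable measurableSet_uIoc)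
      (fun t ht y hy => hC (y, t) ⟨Metric.ball_subset_closedBall hy, hIsub ht⟩)
      (fun t ht y hy => hGdiff t (hIsub ht) y (hcbU (Metric.ball_subset_closedBall hy)))
    rw [hDxint x hx] at hmain
    exact hmain
  -- analyticity of F
  have hLc : ContDiffOn ℝ (⊤ : ℕ∞) L U := by
    rw [hLdef]
    apply ContDiffOn.sum
    intro i _
    exact (hv i).smul contDiffOn_const
  have hFc : ContDiffOn ℝ (⊤ : ℕ∞) F U :=
    (contDiffOn_infty_iff_fderiv_of_isOpen hU).2
      ⟨fun x hx => (hFderiv x hx).differentiableAt.differentiableWithinAt,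
        hLc.congr (fun x hx => (hFderiv x hx).fderiv)⟩
  exact ⟨F, hFc, fun x hx => hFderiv x hx⟩
end

section
/- Let f : ℝᵐ → ℝⁿ be a C^∞ map with component functions f₁,…,fₙ, and let a₁,…,aₙ : ℝⁿ → ℝ be C^∞ functions satisfying ∂aᵢ/∂x_l = ∂a_l/∂xᵢ on ℝⁿ for all i, l (i.e. the 1-form Σᵢ aᵢ dxᵢ is closed). Define b₁,…,b_m : ℝᵐ → ℝ by bⱼ(y) = Σᵢ aᵢ(f(y)) · ∂fᵢ/∂yⱼ (y) (the coefficients of the pullback f*(Σᵢ aᵢ dxᵢ)). Then ∂bⱼ/∂y_k = ∂b_k/∂yⱼ on ℝᵐ for all j, k; i.e. the pullback of a closed smooth 1-form along a smooth map is closed. -/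
open scoped BigOperators

/-- A continuous linear functional on `Fin n → ℝ` is determined by its values on
the standard basis. -/
lemma clm_apply_eq_sum_single {n : ℕ} (L : (Fin n → ℝ) →L[ℝ] ℝ) (v : Fin n → ℝ) :
    L v = ∑ l : Fin n, v l * L (Pi.single l 1) := by
  have hv : v = ∑ l : Fin n, (v l) • (Pi.single l 1 : Fin n → ℝ) := by
    funext i
    simp [Finset.sum_apply, Pi.single_apply, mul_comm]
  conv_lhs => rw [hv]
  rw [map_sum]
  simp [smul_eq_mul]

/-- The pullback of a closed smooth 1-form along a smooth map is closed: if
`ω = Σᵢ aᵢ dxᵢ` is closed (`∂aᵢ/∂x_l = ∂a_l/∂xᵢ`) and `f : ℝᵐ → ℝⁿ` is `C^∞`, then the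
coefficients `bⱼ(y) = Σᵢ aᵢ(f(y))·∂fᵢ/∂yⱼ(y)` of `f*ω` satisfy `∂bⱼ/∂y_k = ∂b_k/∂yⱼ`. -/
theorem pullback_closed_one_form_closed (m n : ℕ)
    (f : (Fin m → ℝ) → Fin n → ℝ) (hf : ContDiff ℝ (⊤ : ℕ∞) f)
    (a : Fin n → (Fin n → ℝ) → ℝ) (ha : ∀ i, ContDiff ℝ (⊤ : ℕ∞) (a i))
    (hclosed : ∀ (i l : Fin n) (x : Fin n → ℝ),
      fderiv ℝ (a i) x (Pi.single l 1) = fderiv ℝ (a l) x (Pi.single i 1))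
    (b : Fin m → (Fin m → ℝ) → ℝ)
    (hbdef : ∀ (j : Fin m) (y : Fin m → ℝ),
      b j y = ∑ i : Fin n, a i (f y) * fderiv ℝ (fun z => f z i) y (Pi.single j 1)) :
    ∀ (j k : Fin m) (y : Fin m → ℝ),
      fderiv ℝ (b j) y (Pi.single k 1) = fderiv ℝ (b k) y (Pi.single j 1) := by
  -- component functions of f
  set g : Fin n → (Fin m → ℝ) → ℝ := fun i z => f z i with hg_def
  have hg : ∀ i, ContDiff ℝ (⊤ : ℕ∞) (g i) := fun i => (contDiff_pi.1 hf i)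
  -- smoothness of the partial derivative maps
  have hDg : ∀ (i : Fin n) (v : Fin m → ℝ),
      ContDiff ℝ (⊤ : ℕ∞) (fun y => fderiv ℝ (g i) y v) := by
    intro i v
    exact ((hg i).fderiv_right (by simp)).clm_apply contDiff_const
  have haf : ∀ i, ContDiff ℝ (⊤ : ℕ∞) (fun y => a i (f y)) := fun i => (ha i).comp hf
  -- derivative of the composite a i ∘ f
  have hcomp : ∀ (i : Fin n) (y : Fin m → ℝ) (v : Fin m → ℝ),
      fderiv ℝ (fun y' => a i (f y')) y v
        = ∑ l : Fin n, fderiv ℝ (a l) (f y) (Pi.single i 1)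
            * fderiv ℝ (g l) y v := by
    intro i y v
    have h1 : fderiv ℝ (fun y' => a i (f y')) y
        = (fderiv ℝ (a i) (f y)).comp (fderiv ℝ f y) :=
      fderiv_comp y ((ha i).differentiable (by simp) _) (hf.differentiable (by simp) _)
    have h2 : fderiv ℝ f y = ContinuousLinearMap.pi fun l => fderiv ℝ (g l) y := by
      exact fderiv_pi (fun l => ((hg l).differentiable (by simp)) y)
    rw [h1]
    simp only [ContinuousLinearMap.comp_apply]
    rw [clm_apply_eq_sum_single (fderiv ℝ (a i) (f y))]
    refine Finset.sum_congr rfl fun l _ => ?_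
    rw [h2, ContinuousLinearMap.pi_apply, hclosed i l (f y), mul_comm]
  -- second derivative symmetry for components of f
  have hsymm : ∀ (i : Fin n) (y : Fin m → ℝ) (v w : Fin m → ℝ),
      fderiv ℝ (fderiv ℝ (g i)) y v w = fderiv ℝ (fderiv ℝ (g i)) y w v := by
    intro i y v w
    exact ((hg i).contDiffAt.isSymmSndFDerivAt (by rw [minSmoothness_of_isRCLikeNormedField]; exact WithTop.coe_le_coe.mpr le_top)) v w
  -- derivative of y ↦ fderiv (g i) y v in direction w
  have hD2 : ∀ (i : Fin n) (y : Fin m → ℝ) (v w : Fin m → ℝ),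
      fderiv ℝ (fun y' => fderiv ℝ (g i) y' v) y w
        = fderiv ℝ (fderiv ℝ (g i)) y w v := by
    intro i y v w
    have hd : DifferentiableAt ℝ (fderiv ℝ (g i)) y :=
      (((hg i).fderiv_right (m := 1) (by exact WithTop.coe_le_coe.mpr le_top)).differentiable one_ne_zero) y
    rw [fderiv_clm_apply hd (differentiableAt_const v)]
    simp
  -- the key formula for the derivative of b j
  have key : ∀ (j k : Fin m) (y : Fin m → ℝ),
      fderiv ℝ (b j) y (Pi.single k 1)
        = (∑ i : Fin n, ∑ l : Fin n,
            fderiv ℝ (a l) (f y) (Pi.single i 1)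
              * fderiv ℝ (g l) y (Pi.single k 1)
              * fderiv ℝ (g i) y (Pi.single j 1))
          + ∑ i : Fin n, a i (f y)
              * fderiv ℝ (fderiv ℝ (g i)) y (Pi.single k 1) (Pi.single j 1) := by
    intro j k y
    have hb_eq : b j = fun y' => ∑ i : Fin n,
        a i (f y') * fderiv ℝ (g i) y' (Pi.single j 1) := by
      funext y'; exact hbdef j y'
    rw [hb_eq]
    have hdiffs : ∀ i : Fin n, DifferentiableAt ℝ
        (fun y' => a i (f y') * fderiv ℝ (g i) y' (Pi.single j 1)) y := by
      intro i
      exact (((haf i).differentiable (by simp)) y).mul (((hDg i _).differentiable (by simp)) y)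
    rw [fderiv_fun_sum (fun i _ => hdiffs i), ContinuousLinearMap.sum_apply]
    rw [Finset.sum_congr rfl (fun i _ => ?_), ← Finset.sum_add_distrib]
    rw [fderiv_fun_mul (((haf i).differentiable (by simp)) y) (((hDg i _).differentiable (by simp)) y)]
    simp only [ContinuousLinearMap.add_apply, ContinuousLinearMap.smul_apply,
      smul_eq_mul]
    rw [hcomp i y (Pi.single k 1), hD2 i y (Pi.single j 1) (Pi.single k 1)]
    rw [add_comm]
    congr 1
    rw [Finset.mul_sum]
    exact Finset.sum_congr rfl fun l _ => by ring
  intro j k y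
  rw [key j k y, key k j y]
  congr 1
  · rw [Finset.sum_comm]
    refine Finset.sum_congr rfl fun i _ => Finset.sum_congr rfl fun l _ => ?_
    rw [hclosed l i (f y)]
    ring
  · refine Finset.sum_congr rfl fun i _ => ?_
    rw [hsymm i y (Pi.single k 1) (Pi.single j 1)]
end

section
/- Let U ⊆ ℝⁿ be open and let v₁,…,vₙ : U → ℝ be C^∞ on U with ∂vᵢ/∂xⱼ = ∂vⱼ/∂xᵢ on U for all i, j (the 1-form ω = Σᵢ vᵢ dxᵢ is closed). Let H : ℝ × ℝ → ℝⁿ be a C^∞ map with H([0,1] × [0,1]) ⊆ U such that the endpoints are fixed: H(t,0) = H(0,0) and H(t,1) = H(0,1) for all t ∈ [0,1]. Then the line integrals of ω along the two end paths agree: ∫₀¹ Σᵢ vᵢ(H(0,s)) · ∂Hᵢ/∂s (0,s) ds = ∫₀¹ Σᵢ vᵢ(H(1,s)) · ∂Hᵢ/∂s (1,s) ds. -/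
open MeasureTheory Set ContinuousLinearMap


/-- Well-definedness of the Hurewicz homomorphism: for a closed smooth 1-form
`ω = Σᵢ vᵢ dxᵢ` on an open `U ⊆ ℝⁿ`, the line integral of `ω` along a smooth path is
invariant under smooth endpoint-preserving homotopies `H` within `U`. -/
theorem line_integral_homotopy_invariant (n : ℕ)
    (U : Set (Fin n → ℝ)) (hU : IsOpen U)
    (v : Fin n → (Fin n → ℝ) → ℝ)
    (hv : ∀ i, ContDiffOn ℝ (⊤ : ℕ∞) (v i) U)
    (hsym : ∀ i j : Fin n, ∀ x ∈ U,
      fderiv ℝ (v i) x (Pi.single j 1) = fderiv ℝ (v j) x (Pi.single i 1))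
    (H : ℝ × ℝ → Fin n → ℝ) (hH : ContDiff ℝ (⊤ : ℕ∞) H)
    (hrange : ∀ t ∈ Set.Icc (0 : ℝ) 1, ∀ s ∈ Set.Icc (0 : ℝ) 1, H (t, s) ∈ U)
    (hend0 : ∀ t ∈ Set.Icc (0 : ℝ) 1, H (t, 0) = H (0, 0))
    (hend1 : ∀ t ∈ Set.Icc (0 : ℝ) 1, H (t, 1) = H (0, 1)) :
    ∫ s in (0:ℝ)..1, ∑ i, v i (H (0, s)) * deriv (fun s' => H (0, s') i) s
      = ∫ s in (0:ℝ)..1, ∑ i, v i (H (1, s)) * deriv (fun s' => H (1, s') i) s := by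
  classical
  have hHd : Differentiable ℝ H := hH.differentiable (by simp)
  have hΦ : ContDiff ℝ (⊤ : ℕ∞) (fderiv ℝ H) := hH.fderiv_right (by simp)
  set Φ : ℝ × ℝ → (ℝ × ℝ) →L[ℝ] (Fin n → ℝ) := fderiv ℝ H with hΦdef
  -- the two functions for Green's theorem
  set f : ℝ × ℝ → ℝ := fun p => ∑ i, v i (H p) * Φ p (0, 1) i with hfdef
  set g : ℝ × ℝ → ℝ := fun p => -∑ i, v i (H p) * Φ p (1, 0) i with hgdef
  -- derivative of the slice in terms of Φ
  have key : ∀ (t s : ℝ) (i : Fin n),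
      deriv (fun s' => H (t, s') i) s = Φ (t, s) (0, 1) i := by
    intro t s i
    have h1 : HasDerivAt (fun s' : ℝ => (t, s')) ((0 : ℝ), (1 : ℝ)) s :=
      (hasDerivAt_const s t).prodMk (hasDerivAt_id s)
    have h2 := (hHd (t, s)).hasFDerivAt.comp_hasDerivAt s h1
    have h3 := (proj (R := ℝ) (φ := fun _ : Fin n => ℝ) i).hasFDerivAt.comp_hasDerivAt s h2
    simpa [Function.comp_def] using h3.deriv
  have keyt : ∀ (t s : ℝ) (i : Fin n),
      deriv (fun t' => H (t', s) i) t = Φ (t, s) (1, 0) i := by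
    intro t s i
    have h1 : HasDerivAt (fun t' : ℝ => (t', s)) ((1 : ℝ), (0 : ℝ)) t :=
      (hasDerivAt_id t).prodMk (hasDerivAt_const t s)
    have h2 := (hHd (t, s)).hasFDerivAt.comp_hasDerivAt t h1
    have h3 := (proj (R := ℝ) (φ := fun _ : Fin n => ℝ) i).hasFDerivAt.comp_hasDerivAt t h2
    simpa [Function.comp_def] using h3.deriv
  -- explicit derivatives of f and g at points mapping into U
  have hasF : ∀ (w : ℝ × ℝ) (p : ℝ × ℝ), H p ∈ U →
      HasFDerivAt (fun q => ∑ i, v i (H q) * Φ q w i)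
        (∑ i, ((v i (H p)) • ((proj (R := ℝ) (φ := fun _ : Fin n => ℝ) i).comp
            ((ContinuousLinearMap.apply ℝ (Fin n → ℝ) w).comp (fderiv ℝ Φ p)))
          + (Φ p w i) • ((fderiv ℝ (v i) (H p)).comp (Φ p)))) p := by
    intro w p hp
    apply HasFDerivAt.fun_sum
    intro i _
    have hc : HasFDerivAt (fun q => v i (H q)) ((fderiv ℝ (v i) (H p)).comp (Φ p)) p := by
      have hvi : DifferentiableAt ℝ (v i) (H p) :=
        (((hv i).contDiffAt (hU.mem_nhds hp)).differentiableAt (by simp))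
      exact hvi.hasFDerivAt.comp p (hHd p).hasFDerivAt
    have hd : HasFDerivAt (fun q => Φ q w i)
        ((proj (R := ℝ) (φ := fun _ : Fin n => ℝ) i).comp
          ((ContinuousLinearMap.apply ℝ (Fin n → ℝ) w).comp (fderiv ℝ Φ p))) p := by
      have h1 := ((hΦ.differentiable (by simp)) p).hasFDerivAt
      have h2 := (ContinuousLinearMap.apply ℝ (Fin n → ℝ) w).hasFDerivAt.comp p h1
      exact (proj (R := ℝ) (φ := fun _ : Fin n => ℝ) i).hasFDerivAt.comp p h2
    exact hc.mul hd
  -- symmetry of second derivative of H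
  have hsymH : ∀ p : ℝ × ℝ, fderiv ℝ Φ p (1, 0) (0, 1) = fderiv ℝ Φ p (0, 1) (1, 0) := by
    intro p
    exact second_derivative_symmetric (fun y => (hHd y).hasFDerivAt)
      ((hΦ.differentiable (by simp)) p).hasFDerivAt _ _
  -- the closedness cancellation
  have hvpart : ∀ x ∈ U, ∀ a b : Fin n → ℝ,
      ∑ i, fderiv ℝ (v i) x a * b i = ∑ i, fderiv ℝ (v i) x b * a i := by
    intro x hx a b
    have expand : ∀ (i : Fin n) (w : Fin n → ℝ),
        fderiv ℝ (v i) x w = ∑ j, w j * fderiv ℝ (v i) x (Pi.single j 1) := by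
      intro i w
      have hw : w = ∑ j, w j • (Pi.single j 1 : Fin n → ℝ) := by
        ext k; simp [Pi.single_apply, Finset.sum_apply]
      conv_lhs => rw [hw]
      rw [map_sum]
      simp [_root_.map_smul]
    have L : ∀ c d : Fin n → ℝ, ∑ i, fderiv ℝ (v i) x c * d i
        = ∑ i, ∑ j, c j * fderiv ℝ (v i) x (Pi.single j 1) * d i := by
      intro c d
      refine Finset.sum_congr rfl fun i _ => ?_
      rw [expand i c, Finset.sum_mul]
    rw [L a b, L b a, Finset.sum_comm]
    refine Finset.sum_congr rfl fun i _ => Finset.sum_congr rfl fun j _ => ?_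
    rw [hsym j i x hx]; ring
  -- divergence is zero on the preimage of U
  have hdiv0 : ∀ p : ℝ × ℝ, H p ∈ U → fderiv ℝ f p (1, 0) + fderiv ℝ g p (0, 1) = 0 := by
    intro p hp
    have hf' := hasF (0, 1) p hp
    have hg' := (hasF (1, 0) p hp).neg
    rw [(show f = fun q => ∑ i, v i (H q) * Φ q (0, 1) i from rfl)] at *
    have e1 : fderiv ℝ f p = _ := hf'.fderiv
    have e2 : fderiv ℝ g p = _ := hg'.fderiv
    rw [e1, e2]
    simp only [ContinuousLinearMap.neg_apply, ContinuousLinearMap.sum_apply,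
      ContinuousLinearMap.add_apply, ContinuousLinearMap.smul_apply,
      ContinuousLinearMap.comp_apply, ContinuousLinearMap.proj_apply,
      ContinuousLinearMap.apply_apply, smul_eq_mul]
    have hswap := hvpart (H p) hp (Φ p (1, 0)) (Φ p (0, 1))
    rw [Finset.sum_add_distrib, Finset.sum_add_distrib]
    have h1 : ∑ i, v i (H p) * fderiv ℝ Φ p (1, 0) (0, 1) i
        = ∑ i, v i (H p) * fderiv ℝ Φ p (0, 1) (1, 0) i := by rw [hsymH p]
    have h2 : ∑ i, Φ p (0, 1) i * fderiv ℝ (v i) (H p) (Φ p (1, 0))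
        = ∑ i, Φ p (1, 0) i * fderiv ℝ (v i) (H p) (Φ p (0, 1)) := by
      have := hvpart (H p) hp (Φ p (1, 0)) (Φ p (0, 1))
      calc ∑ i, Φ p (0, 1) i * fderiv ℝ (v i) (H p) (Φ p (1, 0))
          = ∑ i, fderiv ℝ (v i) (H p) (Φ p (1, 0)) * Φ p (0, 1) i := by
            refine Finset.sum_congr rfl fun i _ => by ring
        _ = ∑ i, fderiv ℝ (v i) (H p) (Φ p (0, 1)) * Φ p (1, 0) i := this
        _ = ∑ i, Φ p (1, 0) i * fderiv ℝ (v i) (H p) (Φ p (0, 1)) := by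
            refine Finset.sum_congr rfl fun i _ => by ring
    linarith [h1, h2]
  -- the rectangle maps into U
  have hsub : Set.uIcc (0:ℝ) 1 ×ˢ Set.uIcc (0:ℝ) 1 ⊆ H ⁻¹' U := by
    rw [Set.uIcc_of_le (zero_le_one' ℝ)]
    rintro ⟨t, s⟩ ⟨ht, hs⟩
    exact hrange t ht s hs
  -- continuity of f and g on the rectangle
  have hcont : ∀ w : ℝ × ℝ,
      ContinuousOn (fun p => ∑ i, v i (H p) * Φ p w i) (H ⁻¹' U) := by
    intro w
    refine continuousOn_finset_sum _ fun i _ => ContinuousOn.mul ?_ ?_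
    · exact (hv i).continuousOn.comp hH.continuous.continuousOn fun p hp => hp
    · exact (((continuous_apply i).comp
        ((ContinuousLinearMap.apply ℝ (Fin n → ℝ) w).continuous.comp
          hΦ.continuous))).continuousOn
  have Hcf : ContinuousOn f (Set.uIcc (0:ℝ) 1 ×ˢ Set.uIcc (0:ℝ) 1) :=
    (hcont (0, 1)).mono hsub
  have Hcg : ContinuousOn g (Set.uIcc (0:ℝ) 1 ×ˢ Set.uIcc (0:ℝ) 1) :=
    ((hcont (1, 0)).mono hsub).neg
  have hmemIoo : ∀ p ∈ Set.Ioo (min (0:ℝ) 1) (max (0:ℝ) 1) ×ˢ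
      Set.Ioo (min (0:ℝ) 1) (max (0:ℝ) 1) \ (∅ : Set (ℝ × ℝ)), H p ∈ U := by
    rintro ⟨t, s⟩ ⟨⟨ht, hs⟩, -⟩
    simp only [min_self, min_eq_left, max_eq_right, zero_le_one] at ht hs
    exact hrange t (Set.Ioo_subset_Icc_self ht) s (Set.Ioo_subset_Icc_self hs)
  have Hdf : ∀ p ∈ Set.Ioo (min (0:ℝ) 1) (max (0:ℝ) 1) ×ˢ
      Set.Ioo (min (0:ℝ) 1) (max (0:ℝ) 1) \ (∅ : Set (ℝ × ℝ)),
      HasFDerivAt f (fderiv ℝ f p) p := fun p hp =>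
    ((hasF (0, 1) p (hmemIoo p hp)).differentiableAt).hasFDerivAt
  have Hdg : ∀ p ∈ Set.Ioo (min (0:ℝ) 1) (max (0:ℝ) 1) ×ˢ
      Set.Ioo (min (0:ℝ) 1) (max (0:ℝ) 1) \ (∅ : Set (ℝ × ℝ)),
      HasFDerivAt g (fderiv ℝ g p) p := fun p hp =>
    (((hasF (1, 0) p (hmemIoo p hp)).neg).differentiableAt).hasFDerivAt
  have Hi : IntegrableOn (fun p => fderiv ℝ f p (1, 0) + fderiv ℝ g p (0, 1))
      (Set.uIcc (0:ℝ) 1 ×ˢ Set.uIcc (0:ℝ) 1) := by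
    refine (integrableOn_zero).congr_fun (fun p hp => (hdiv0 p (hsub hp)).symm)
      (measurableSet_uIcc.prod measurableSet_uIcc)
  have green := integral2_divergence_prod_of_hasFDerivAt_off_countable f g
    (fun p => fderiv ℝ f p) (fun p => fderiv ℝ g p) 0 0 1 1 ∅ Set.countable_empty
    Hcf Hcg Hdf Hdg Hi
  -- the LHS of Green's formula vanishes
  have hLHS : (∫ t in (0:ℝ)..1, ∫ s in (0:ℝ)..1,
      fderiv ℝ f (t, s) (1, 0) + fderiv ℝ g (t, s) (0, 1)) = 0 := by
    have h0 : ∀ t ∈ Set.uIcc (0:ℝ) 1,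
        (∫ s in (0:ℝ)..1, fderiv ℝ f (t, s) (1, 0) + fderiv ℝ g (t, s) (0, 1)) = 0 := by
      intro t ht
      have h1 : Set.EqOn (fun s => fderiv ℝ f (t, s) (1, 0) + fderiv ℝ g (t, s) (0, 1))
          (fun _ => (0:ℝ)) (Set.uIcc (0:ℝ) 1) := fun s hs => hdiv0 (t, s) (hsub ⟨ht, hs⟩)
      simpa using intervalIntegral.integral_congr h1
    have h2 : Set.EqOn (fun t => ∫ s in (0:ℝ)..1,
        fderiv ℝ f (t, s) (1, 0) + fderiv ℝ g (t, s) (0, 1)) (fun _ => (0:ℝ))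
        (Set.uIcc (0:ℝ) 1) := fun t ht => h0 t ht
    simpa using intervalIntegral.integral_congr h2
  -- boundary terms of g vanish
  have hg0 : ∀ y : ℝ, (∀ t ∈ Set.Icc (0:ℝ) 1, H (t, y) = H (0, y)) →
      (∫ t in (0:ℝ)..1, g (t, y)) = 0 := by
    intro y hy
    have hzero : ∀ t ∈ Set.Ioo (0:ℝ) 1, g (t, y) = 0 := by
      intro t ht
      have hc : ∀ i : Fin n, Φ (t, y) (1, 0) i = 0 := by
        intro i
        rw [← keyt t y i]
        have heq : (fun t' => H (t', y) i) =ᶠ[nhds t] fun _ => H (0, y) i := by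
          filter_upwards [Ioo_mem_nhds ht.1 ht.2] with z hz using
            congrFun (hy z (Set.Ioo_subset_Icc_self hz)) i
        rw [heq.deriv_eq, deriv_const]
      simp only [hgdef, hc, mul_zero, Finset.sum_const_zero, neg_zero]
    have h1 : ∀ᵐ x : ℝ, x ≠ (1:ℝ) := by
      rw [MeasureTheory.ae_iff]
      simp [measure_singleton]
    have hae : ∀ᵐ x : ℝ, x ∈ Set.uIoc (0:ℝ) 1 → (fun t => g (t, y)) x = (fun _ => (0:ℝ)) x := by
      filter_upwards [h1] with x hx hxI
      rw [Set.uIoc_of_le (zero_le_one' ℝ)] at hxI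
      exact hzero x ⟨hxI.1, lt_of_le_of_ne hxI.2 hx⟩
    simp only [intervalIntegral.integral_congr_ae (μ := volume) hae, intervalIntegral.integral_const, smul_eq_mul, mul_zero]
  have hgb1 := hg0 1 hend1
  have hgb0 := hg0 0 hend0
  rw [hLHS, hgb1, hgb0] at green
  -- rewrite the goal integrands
  have hgoalL : (∫ s in (0:ℝ)..1, ∑ i, v i (H (0, s)) * deriv (fun s' => H (0, s') i) s)
      = ∫ s in (0:ℝ)..1, f (0, s) := by
    refine intervalIntegral.integral_congr fun s _ => ?_
    simp only [hfdef, key]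
  have hgoalR : (∫ s in (0:ℝ)..1, ∑ i, v i (H (1, s)) * deriv (fun s' => H (1, s') i) s)
      = ∫ s in (0:ℝ)..1, f (1, s) := by
    refine intervalIntegral.integral_congr fun s _ => ?_
    simp only [hfdef, key]
  rw [hgoalL, hgoalR]
  linarith [green]
end
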